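/- arXiv:2208.12772 — 5 statements merged into one kernel-verified Lean document; each statement's English description precedes it below -/
import Mathlib

section
/- Let N, d ≥ 1. Let f : ℝ^d → ℝ^d be odd (f(−z) = −f(z) for all z) and one-sided Lipschitz with constant L_f ∈ ℝ, and let u be such that (i) for every probability measure μ the map x ↦ u(x, μ) is one-sided Lipschitz with constant L_u ∈ ℝ, and (ii) u is Lipschitz along empirical measures with constant L_ũ ≥ 0. Then for all X, Y ∈ (ℝ^d)^N, ∑_{i=1}^N ⟨X_i − Y_i, V_i(X) − V_i(Y)⟩ ≤ (2 L_f⁺ + L_u + 1/2 + L_ũ/2) ∑_{i=1}^N |X_i − Y_i|², where L_f⁺ := max{L_f, 0}. -/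
/-! For an odd one-sided Lipschitz `f`, the pair terms `f (X i - X j) - f (Y i - Y j)` are
antisymmetric in `(i, j)`, so symmetrizing the double sum replaces `X i - Y i` by the
difference `(X i - X j) - (Y i - Y j)` of the arguments of `f`, where the one-sided Lipschitz
bound applies; the crude estimate `‖a - b‖² ≤ 2‖a‖² + 2‖b‖²` then costs the factor `2` in
`2 L_f⁺`. The measure-dependent drift is split as `u(Xᵢ, μ^X) - u(Yᵢ, μ^X)`, handled by
the one-sided Lipschitz bound in space, plus `u(Yᵢ, μ^X) - u(Yᵢ, μ^Y)`, handled by Young's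
inequality and the Lipschitz bound along empirical measures. -/

open RealInnerProductSpace MeasureTheory

noncomputable def empMeas {d N : ℕ} (a : Fin N → EuclideanSpace ℝ (Fin d)) :
    Measure (EuclideanSpace ℝ (Fin d)) :=
  (N : ENNReal)⁻¹ • ∑ j, Measure.dirac (a j)

theorem isProbabilityMeasure_empMeas {d N : ℕ} (hN : N ≠ 0)
    (a : Fin N → EuclideanSpace ℝ (Fin d)) : IsProbabilityMeasure (empMeas a) := by
  constructor
  simp [empMeas, ENNReal.inv_mul_cancel (Nat.cast_ne_zero.mpr hN)]

theorem norm_sub_sq_le_two_mul {F : Type*} [SeminormedAddCommGroup F] (x y : F) :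
    ‖x - y‖ ^ 2 ≤ 2 * (‖x‖ ^ 2 + ‖y‖ ^ 2) :=
  (pow_le_pow_left₀ (norm_nonneg _) (norm_sub_le x y) 2).trans add_sq_le

theorem sum_sum_norm_sub_sq_le {ι F : Type*} [Fintype ι] [SeminormedAddCommGroup F] (z : ι → F) :
    ∑ i, ∑ j, ‖z i - z j‖ ^ 2 ≤ 4 * Fintype.card ι * ∑ i, ‖z i‖ ^ 2 := by
  calc ∑ i, ∑ j, ‖z i - z j‖ ^ 2
      ≤ ∑ i, ∑ j, 2 * (‖z i‖ ^ 2 + ‖z j‖ ^ 2) := by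
        gcongr with i _ j _; exact norm_sub_sq_le_two_mul _ _
    _ = 4 * Fintype.card ι * ∑ i, ‖z i‖ ^ 2 := by
        simp only [mul_add, Finset.sum_add_distrib, Finset.sum_const, Finset.card_univ,
          nsmul_eq_mul, ← Finset.mul_sum]
        ring

section InnerProductSpace

variable {E : Type*} [NormedAddCommGroup E] [InnerProductSpace ℝ E]

def OneSidedLipschitz (L : ℝ) (g : E → E) : Prop :=
  ∀ x x', ⟪x - x', g x - g x'⟫ ≤ L * ‖x - x'‖ ^ 2

theorem real_inner_le_half_norm_sq_add (x y : E) : ⟪x, y⟫ ≤ (‖x‖ ^ 2 + ‖y‖ ^ 2) / 2 := by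
  nlinarith [real_inner_le_norm x y, two_mul_le_add_sq ‖x‖ ‖y‖]

theorem OneSidedLipschitz.inner_sub_le {L : ℝ} {g : E → E} (hg : OneSidedLipschitz L g)
    (h : E → E) (x x' : E) :
    ⟪x - x', g x - h x'⟫ ≤ (L + 1 / 2) * ‖x - x'‖ ^ 2 + ‖g x' - h x'‖ ^ 2 / 2 := by
  have hsplit : g x - h x' = (g x - g x') + (g x' - h x') := by abel
  rw [hsplit, inner_add_right]
  linarith [hg x x', real_inner_le_half_norm_sq_add (x - x') (g x' - h x')]

variable {ι : Type*} [Fintype ι]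

theorem two_mul_sum_sum_inner_of_antisymm (z : ι → E) (g : ι → ι → E)
    (hg : ∀ i j, g j i = -g i j) :
    2 * ∑ i, ∑ j, ⟪z i, g i j⟫ = ∑ i, ∑ j, ⟪z i - z j, g i j⟫ := by
  have hswap : ∑ i, ∑ j, ⟪z i, g i j⟫ = -∑ i, ∑ j, ⟪z j, g i j⟫ := by
    rw [Finset.sum_comm]
    simp only [← Finset.sum_neg_distrib]
    refine Finset.sum_congr rfl fun i _ => Finset.sum_congr rfl fun j _ => ?_
    rw [hg i j, inner_neg_right]
  simp only [inner_sub_left, Finset.sum_sub_distrib]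
  linarith

theorem OneSidedLipschitz.sum_inner_sum_sub_le_of_odd {f : E → E} {L : ℝ}
    (hf : OneSidedLipschitz L f) (hodd : ∀ z, f (-z) = -f z) (X Y : ι → E) :
    ∑ i, ⟪X i - Y i, ∑ j, (f (X i - X j) - f (Y i - Y j))⟫
      ≤ 2 * max L 0 * Fintype.card ι * ∑ i, ‖X i - Y i‖ ^ 2 := by
  set z := fun i => X i - Y i
  set g := fun i j => f (X i - X j) - f (Y i - Y j)
  have hanti : ∀ i j, g j i = -g i j := fun i j => by
    simp only [g, ← neg_sub (X i), ← neg_sub (Y i), hodd]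
    abel
  have hpair : ∀ i j, ⟪z i - z j, g i j⟫ ≤ max L 0 * ‖z i - z j‖ ^ 2 := fun i j => by
    have hz : z i - z j = (X i - X j) - (Y i - Y j) := by simp only [z]; abel
    rw [hz]
    exact (hf _ _).trans (mul_le_mul_of_nonneg_right (le_max_left _ _) (sq_nonneg _))
  have hsum : 2 * ∑ i, ∑ j, ⟪z i, g i j⟫ ≤ max L 0 * (4 * Fintype.card ι * ∑ i, ‖z i‖ ^ 2) :=
    calc 2 * ∑ i, ∑ j, ⟪z i, g i j⟫ = ∑ i, ∑ j, ⟪z i - z j, g i j⟫ :=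
          two_mul_sum_sum_inner_of_antisymm z g hanti
      _ ≤ ∑ i, ∑ j, max L 0 * ‖z i - z j‖ ^ 2 := by gcongr with i _ j _; exact hpair i j
      _ ≤ max L 0 * (4 * Fintype.card ι * ∑ i, ‖z i‖ ^ 2) := by
          simp only [← Finset.mul_sum]
          exact mul_le_mul_of_nonneg_left (sum_sum_norm_sub_sq_le z) (le_max_right L 0)
  simp only [inner_sum]
  linarith

end InnerProductSpace

theorem onesided_lipschitz_systemMap_general (d N : ℕ) (hN : 1 ≤ N)
    (f : EuclideanSpace ℝ (Fin d) → EuclideanSpace ℝ (Fin d))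
    (u : EuclideanSpace ℝ (Fin d) → Measure (EuclideanSpace ℝ (Fin d)) →
      EuclideanSpace ℝ (Fin d))
    (Lf Lu Lut : ℝ)
    (hodd : ∀ z : EuclideanSpace ℝ (Fin d), f (-z) = -f z)
    (hf : ∀ z z' : EuclideanSpace ℝ (Fin d), ⟪z - z', f z - f z'⟫ ≤ Lf * ‖z - z'‖ ^ 2)
    (hu : ∀ μ : Measure (EuclideanSpace ℝ (Fin d)), IsProbabilityMeasure μ →
      ∀ x x' : EuclideanSpace ℝ (Fin d), ⟪x - x', u x μ - u x' μ⟫ ≤ Lu * ‖x - x'‖ ^ 2)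
    (huemp : ∀ (x : EuclideanSpace ℝ (Fin d)) (a b : Fin N → EuclideanSpace ℝ (Fin d)),
      ‖u x (empMeas a) - u x (empMeas b)‖ ^ 2 ≤ Lut / N * ∑ j, ‖a j - b j‖ ^ 2) :
    ∀ X Y : Fin N → EuclideanSpace ℝ (Fin d),
      ∑ i, ⟪X i - Y i,
          (u (X i) (empMeas X) + (N : ℝ)⁻¹ • ∑ j, f (X i - X j))
            - (u (Y i) (empMeas Y) + (N : ℝ)⁻¹ • ∑ j, f (Y i - Y j))⟫
        ≤ (2 * max Lf 0 + Lu + 1 / 2 + Lut / 2) * ∑ i, ‖X i - Y i‖ ^ 2 := by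
  intro X Y
  have hN0 : (N : ℝ) ≠ 0 := by positivity
  set S := ∑ i, ‖X i - Y i‖ ^ 2
  have hsplit : ∀ i, ⟪X i - Y i,
      (u (X i) (empMeas X) + (N : ℝ)⁻¹ • ∑ j, f (X i - X j))
        - (u (Y i) (empMeas Y) + (N : ℝ)⁻¹ • ∑ j, f (Y i - Y j))⟫
      = ⟪X i - Y i, u (X i) (empMeas X) - u (Y i) (empMeas Y)⟫
        + (N : ℝ)⁻¹ * ⟪X i - Y i, ∑ j, (f (X i - X j) - f (Y i - Y j))⟫ := fun i => by
    rw [Finset.sum_sub_distrib, ← inner_smul_right, ← inner_add_right, smul_sub]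
    congr 1; abel
  have hdrift : ∀ i, ⟪X i - Y i, u (X i) (empMeas X) - u (Y i) (empMeas Y)⟫
      ≤ (Lu + 1 / 2) * ‖X i - Y i‖ ^ 2 + Lut / N * S / 2 := fun i => by
    have hLu : OneSidedLipschitz Lu (u · (empMeas X)) :=
      hu _ (isProbabilityMeasure_empMeas (by omega) X)
    grw [hLu.inner_sub_le (u · (empMeas Y)), huemp (Y i) X Y]
  have hinteraction := OneSidedLipschitz.sum_inner_sum_sub_le_of_odd hf hodd X Y
  rw [Fintype.card_fin] at hinteraction
  simp only [hsplit, Finset.sum_add_distrib, ← Finset.mul_sum]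
  grw [Finset.sum_le_sum fun i _ => hdrift i, hinteraction]
  rw [Finset.sum_add_distrib, ← Finset.mul_sum, Finset.sum_const, Finset.card_univ,
    Fintype.card_fin, nsmul_eq_mul]
  field_simp
  exact le_of_eq (by ring)

/-- One-sided Lipschitz property of the system map `V` of the interacting
particle system: for `f` odd and one-sided Lipschitz with constant `L_f`, and `u` one-sided
Lipschitz with constant `L_u` in space and Lipschitz along empirical measures with constant
`L_ũ`, one has
`∑ᵢ ⟪Xᵢ − Yᵢ, Vᵢ(X) − Vᵢ(Y)⟫ ≤ (2 L_f⁺ + L_u + 1/2 + L_ũ/2) ∑ᵢ ‖Xᵢ − Yᵢ‖²`. -/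
theorem onesided_lipschitz_systemMap (d N : ℕ) (hd : 1 ≤ d) (hN : 1 ≤ N)
    (f : EuclideanSpace ℝ (Fin d) → EuclideanSpace ℝ (Fin d))
    (u : EuclideanSpace ℝ (Fin d) → Measure (EuclideanSpace ℝ (Fin d)) →
      EuclideanSpace ℝ (Fin d))
    (Lf Lu Lut : ℝ) (hLut : 0 ≤ Lut)
    (hodd : ∀ z : EuclideanSpace ℝ (Fin d), f (-z) = -f z)
    (hf : ∀ z z' : EuclideanSpace ℝ (Fin d), ⟪z - z', f z - f z'⟫ ≤ Lf * ‖z - z'‖ ^ 2)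
    (hu : ∀ μ : Measure (EuclideanSpace ℝ (Fin d)), IsProbabilityMeasure μ →
      ∀ x x' : EuclideanSpace ℝ (Fin d), ⟪x - x', u x μ - u x' μ⟫ ≤ Lu * ‖x - x'‖ ^ 2)
    (huemp : ∀ (x : EuclideanSpace ℝ (Fin d)) (a b : Fin N → EuclideanSpace ℝ (Fin d)),
      ‖u x (empMeas a) - u x (empMeas b)‖ ^ 2 ≤ Lut / N * ∑ j, ‖a j - b j‖ ^ 2) :
    ∀ X Y : Fin N → EuclideanSpace ℝ (Fin d),
      ∑ i, ⟪X i - Y i,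
          (u (X i) (empMeas X) + (N : ℝ)⁻¹ • ∑ j, f (X i - X j))
            - (u (Y i) (empMeas Y) + (N : ℝ)⁻¹ • ∑ j, f (Y i - Y j))⟫
        ≤ (2 * max Lf 0 + Lu + 1 / 2 + Lut / 2) * ∑ i, ‖X i - Y i‖ ^ 2 :=
  onesided_lipschitz_systemMap_general d N hN f u Lf Lu Lut hodd hf hu huemp
end

section
/- Let N, d ≥ 1, let f : ℝ^d → ℝ^d be one-sided Lipschitz with constant L_f ∈ ℝ, let u be such that x ↦ u(x, μ) is one-sided Lipschitz with constant L_u ∈ ℝ for every probability measure μ, and let h > 0 satisfy 2(L_f + L_u)h < 1. If (X, Y) ∈ (ℝ^d)^N × (ℝ^d)^N is an implicit Euler step pair, then for all i, j ∈ {1, …, N}: |Y_i − Y_j|² ≤ |X_i − X_j|² / (1 − 2(L_f + L_u)h). -/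
open RealInnerProductSpace MeasureTheory

/-- The interaction drift `v` evaluated along an empirical measure:
`v(x, μ^a) = u(x, μ^a) + (1/N) ∑_j f(x − a_j)`. -/
noncomputable def vEmp {d N : ℕ}
    (f : EuclideanSpace ℝ (Fin d) → EuclideanSpace ℝ (Fin d))
    (u : EuclideanSpace ℝ (Fin d) → Measure (EuclideanSpace ℝ (Fin d)) →
      EuclideanSpace ℝ (Fin d))
    (x : EuclideanSpace ℝ (Fin d)) (a : Fin N → EuclideanSpace ℝ (Fin d)) :
    EuclideanSpace ℝ (Fin d) :=
  u x (empMeas a) + (N : ℝ)⁻¹ • ∑ j, f (x - a j)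

/-- `(X, Y)` is an implicit Euler step pair with step size `h` if
`Yᵢ = Xᵢ + h·v(Yᵢ, μ^Y)` for every `i`. -/
def IsImplicitPair {d N : ℕ}
    (f : EuclideanSpace ℝ (Fin d) → EuclideanSpace ℝ (Fin d))
    (u : EuclideanSpace ℝ (Fin d) → Measure (EuclideanSpace ℝ (Fin d)) →
      EuclideanSpace ℝ (Fin d))
    (h : ℝ) (X Y : Fin N → EuclideanSpace ℝ (Fin d)) : Prop :=
  ∀ i, Y i = X i + h • vEmp f u (Y i) Y

lemma empMeas_isProb {d N : ℕ} (hN : 1 ≤ N) (a : Fin N → EuclideanSpace ℝ (Fin d)) :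
    IsProbabilityMeasure (empMeas a) := by
  constructor
  simp [empMeas, Measure.finset_sum_apply, Finset.card_univ]
  rw [ENNReal.inv_mul_cancel] <;> simp [Nat.one_le_iff_ne_zero.mp hN]

/-- **Differences relationship.** For an implicit Euler step pair `(X, Y)`,
`‖Yᵢ − Yⱼ‖² ≤ ‖Xᵢ − Xⱼ‖² / (1 − 2(L_f + L_u)h)`. -/
theorem implicit_pair_differences (d N : ℕ) (hd : 1 ≤ d) (hN : 1 ≤ N)
    (f : EuclideanSpace ℝ (Fin d) → EuclideanSpace ℝ (Fin d))
    (u : EuclideanSpace ℝ (Fin d) → Measure (EuclideanSpace ℝ (Fin d)) →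
      EuclideanSpace ℝ (Fin d))
    (Lf Lu : ℝ)
    (hf : ∀ z z' : EuclideanSpace ℝ (Fin d), ⟪z - z', f z - f z'⟫ ≤ Lf * ‖z - z'‖ ^ 2)
    (hu : ∀ μ : Measure (EuclideanSpace ℝ (Fin d)), IsProbabilityMeasure μ →
      ∀ x x' : EuclideanSpace ℝ (Fin d), ⟪x - x', u x μ - u x' μ⟫ ≤ Lu * ‖x - x'‖ ^ 2)
    (h : ℝ) (hh0 : 0 < h) (hh : 2 * (Lf + Lu) * h < 1)
    (X Y : Fin N → EuclideanSpace ℝ (Fin d))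
    (hXY : IsImplicitPair f u h X Y) :
    ∀ i j : Fin N, ‖Y i - Y j‖ ^ 2 ≤ ‖X i - X j‖ ^ 2 / (1 - 2 * (Lf + Lu) * h) := by
  intro i j
  set D := Y i - Y j with hD
  set ΔX := X i - X j with hΔX
  have hNpos : (0:ℝ) < N := by exact_mod_cast hN
  -- difference identity
  have e1 : Y i - X i = h • vEmp f u (Y i) Y := by (conv_lhs => rw [hXY i]); abel
  have e2 : Y j - X j = h • vEmp f u (Y j) Y := by (conv_lhs => rw [hXY j]); abel
  have hdiff : D = ΔX + h • (vEmp f u (Y i) Y - vEmp f u (Y j) Y) := by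
    rw [hD, hΔX, smul_sub, ← e1, ← e2]; abel
  -- bound on drift difference
  have hv : ⟪D, vEmp f u (Y i) Y - vEmp f u (Y j) Y⟫ ≤ (Lf + Lu) * ‖D‖ ^ 2 := by
    have hprob := empMeas_isProb hN Y
    have hsplit : vEmp f u (Y i) Y - vEmp f u (Y j) Y
        = (u (Y i) (empMeas Y) - u (Y j) (empMeas Y))
          + (N : ℝ)⁻¹ • ∑ k, (f (Y i - Y k) - f (Y j - Y k)) := by
      simp only [vEmp, Finset.smul_sum, Finset.sum_sub_distrib, smul_sub]
      abel
    rw [hsplit, inner_add_right, real_inner_smul_right, inner_sum]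
    have h1 : ⟪D, u (Y i) (empMeas Y) - u (Y j) (empMeas Y)⟫ ≤ Lu * ‖D‖ ^ 2 :=
      hu _ hprob (Y i) (Y j)
    have h2 : ∀ k : Fin N, ⟪D, f (Y i - Y k) - f (Y j - Y k)⟫ ≤ Lf * ‖D‖ ^ 2 := by
      intro k
      have := hf (Y i - Y k) (Y j - Y k)
      have he : Y i - Y k - (Y j - Y k) = D := by rw [hD]; abel
      rwa [he] at this
    have h3 : ∑ k, ⟪D, f (Y i - Y k) - f (Y j - Y k)⟫ ≤ N * (Lf * ‖D‖ ^ 2) := by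
      calc ∑ k, ⟪D, f (Y i - Y k) - f (Y j - Y k)⟫
          ≤ ∑ _k : Fin N, Lf * ‖D‖ ^ 2 := Finset.sum_le_sum fun k _ => h2 k
        _ = N * (Lf * ‖D‖ ^ 2) := by simp [Finset.card_univ, mul_comm]
    have h4 : (N:ℝ)⁻¹ * ∑ k, ⟪D, f (Y i - Y k) - f (Y j - Y k)⟫ ≤ Lf * ‖D‖ ^ 2 := by
      rw [inv_mul_le_iff₀ hNpos]
      have : (N:ℝ) * (Lf * ‖D‖ ^ 2) = Lf * ‖D‖ ^ 2 * N := by ring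
      linarith
    linarith
  -- main inequality
  have hsq : ‖D‖ ^ 2 = ⟪D, ΔX⟫ + h * ⟪D, vEmp f u (Y i) Y - vEmp f u (Y j) Y⟫ := by
    conv_lhs => rw [← real_inner_self_eq_norm_sq, hdiff]
    rw [inner_add_right, real_inner_smul_right, ← hdiff]
  have hCS : ⟪D, ΔX⟫ ≤ (‖D‖ ^ 2 + ‖ΔX‖ ^ 2) / 2 := by
    have := real_inner_le_norm D ΔX
    nlinarith [sq_nonneg (‖D‖ - ‖ΔX‖)]
  have hmul : h * ⟪D, vEmp f u (Y i) Y - vEmp f u (Y j) Y⟫ ≤ h * ((Lf + Lu) * ‖D‖ ^ 2) :=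
    mul_le_mul_of_nonneg_left hv hh0.le
  rw [le_div_iff₀ (by linarith)]
  nlinarith
end

section
/- Let N, d ≥ 1, let f : ℝ^d → ℝ^d be odd with f(0) = 0 and one-sided Lipschitz with constant L_f ∈ ℝ, and let u satisfy the coercivity bound ⟨y, u(y, μ^a)⟩ ≤ C_u + L̂_u |y|² + (L_ũ/N) ∑_{j=1}^N |a_j|² for all y ∈ ℝ^d and all a ∈ (ℝ^d)^N, where L̂_u := L_u + 1/2 with L_u ∈ ℝ, C_u ≥ 0 and L_ũ ≥ 0. Set Λ := 4 L_f⁺ + 2 L_u + 2 L_ũ + 1 with L_f⁺ := max{L_f, 0}, and let h > 0 satisfy Λh < 1. If (X, Y) ∈ (ℝ^d)^N × (ℝ^d)^N is an implicit Euler step pair, then ∑_{i=1}^N |Y_i|² ≤ ( ∑_{i=1}^N |X_i|² + 2 N C_u h ) / (1 − Λh). -/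
open RealInnerProductSpace MeasureTheory

set_option maxHeartbeats 1600000 in
/-- **Summation relationship.** For an implicit Euler step pair `(X, Y)` with
`Λ·h < 1`, `∑ᵢ ‖Yᵢ‖² ≤ (∑ᵢ ‖Xᵢ‖² + 2NC_u h)/(1 − Λh)` where
`Λ = 4L_f⁺ + 2L_u + 2L_ũ + 1`. -/
theorem implicit_pair_summation (d N : ℕ) (hd : 1 ≤ d) (hN : 1 ≤ N)
    (f : EuclideanSpace ℝ (Fin d) → EuclideanSpace ℝ (Fin d))
    (u : EuclideanSpace ℝ (Fin d) → Measure (EuclideanSpace ℝ (Fin d)) →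
      EuclideanSpace ℝ (Fin d))
    (Lf Lu Lut Cu : ℝ) (hLut : 0 ≤ Lut) (hCu : 0 ≤ Cu)
    (hodd : ∀ z : EuclideanSpace ℝ (Fin d), f (-z) = -f z)
    (hf0 : f 0 = 0)
    (hf : ∀ z z' : EuclideanSpace ℝ (Fin d), ⟪z - z', f z - f z'⟫ ≤ Lf * ‖z - z'‖ ^ 2)
    (hucoer : ∀ (y : EuclideanSpace ℝ (Fin d)) (a : Fin N → EuclideanSpace ℝ (Fin d)),
      ⟪y, u y (empMeas a)⟫ ≤ Cu + (Lu + 1 / 2) * ‖y‖ ^ 2 + Lut / N * ∑ j, ‖a j‖ ^ 2)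
    (h : ℝ) (hh0 : 0 < h)
    (hh : (4 * max Lf 0 + 2 * Lu + 2 * Lut + 1) * h < 1)
    (X Y : Fin N → EuclideanSpace ℝ (Fin d))
    (hXY : IsImplicitPair f u h X Y) :
    ∑ i, ‖Y i‖ ^ 2 ≤
      (∑ i, ‖X i‖ ^ 2 + 2 * N * Cu * h) / (1 - (4 * max Lf 0 + 2 * Lu + 2 * Lut + 1) * h) := by

  classical
  set Λ : ℝ := 4 * max Lf 0 + 2 * Lu + 2 * Lut + 1 with hΛ
  have hNpos : (0:ℝ) < N := by exact_mod_cast hN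
  have hden : 0 < 1 - Λ * h := by linarith
  set S : ℝ := ∑ i, ‖Y i‖ ^ 2 with hS
  set T : ℝ := ∑ i, ‖X i‖ ^ 2 with hT
  have hSnn : 0 ≤ S := Finset.sum_nonneg fun i _ => by positivity
  -- per-particle inequality
  have key : ∀ i, ‖Y i‖ ^ 2 - ‖X i‖ ^ 2 ≤ 2 * h * ⟪Y i, vEmp f u (Y i) Y⟫ := by
    intro i
    have h1 := hXY i
    have h2 : Y i - X i = h • vEmp f u (Y i) Y := by
      conv_lhs => rw [h1]
      abel
    have h3 : ⟪Y i, Y i - X i⟫ = h * ⟪Y i, vEmp f u (Y i) Y⟫ := by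
      rw [h2, real_inner_smul_right]
    have h4 : ⟪Y i, Y i - X i⟫ = ‖Y i‖ ^ 2 - ⟪Y i, X i⟫ := by
      rw [inner_sub_right, real_inner_self_eq_norm_sq]
    have h5 : ⟪Y i, X i⟫ ≤ (‖Y i‖ ^ 2 + ‖X i‖ ^ 2) / 2 := by
      have := real_inner_le_norm (Y i) (X i)
      nlinarith [sq_nonneg (‖Y i‖ - ‖X i‖)]
    nlinarith [h3, h4, h5]
  -- bound on the interaction (f) double sum
  have hfbd : ∑ i, ∑ j, ⟪Y i, f (Y i - Y j)⟫ ≤ 2 * N * max Lf 0 * S := by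
    have hswap : ∑ i, ∑ j, ⟪Y i, f (Y i - Y j)⟫
        = ∑ i, ∑ j, -⟪Y j, f (Y i - Y j)⟫ := by
      rw [Finset.sum_comm]
      refine Finset.sum_congr rfl fun i _ => Finset.sum_congr rfl fun j _ => ?_
      have : f (Y j - Y i) = - f (Y i - Y j) := by
        rw [← hodd]; congr 1; abel
      rw [this, inner_neg_right]
    have hdouble : 2 * (∑ i, ∑ j, ⟪Y i, f (Y i - Y j)⟫)
        = ∑ i, ∑ j, ⟪Y i - Y j, f (Y i - Y j)⟫ := by
      have : 2 * (∑ i, ∑ j, ⟪Y i, f (Y i - Y j)⟫)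
          = (∑ i, ∑ j, ⟪Y i, f (Y i - Y j)⟫)
            + ∑ i, ∑ j, -⟪Y j, f (Y i - Y j)⟫ := by
        rw [← hswap]; ring
      rw [this, ← Finset.sum_add_distrib]
      refine Finset.sum_congr rfl fun i _ => ?_
      rw [← Finset.sum_add_distrib]
      refine Finset.sum_congr rfl fun j _ => ?_
      rw [inner_sub_left]; ring
    have hterm : ∀ i j : Fin N, ⟪Y i - Y j, f (Y i - Y j)⟫
        ≤ max Lf 0 * (2 * ‖Y i‖ ^ 2 + 2 * ‖Y j‖ ^ 2) := by
      intro i j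
      have h1 : ⟪Y i - Y j - 0, f (Y i - Y j) - f 0⟫ ≤ Lf * ‖Y i - Y j - 0‖ ^ 2 :=
        hf (Y i - Y j) 0
      simp only [sub_zero, hf0] at h1
      have h2 : ⟪Y i - Y j, f (Y i - Y j)⟫ ≤ max Lf 0 * ‖Y i - Y j‖ ^ 2 := by
        calc ⟪Y i - Y j, f (Y i - Y j)⟫ ≤ Lf * ‖Y i - Y j‖ ^ 2 := h1
          _ ≤ max Lf 0 * ‖Y i - Y j‖ ^ 2 :=
            mul_le_mul_of_nonneg_right (le_max_left _ _) (sq_nonneg _)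
      have h3 : ‖Y i - Y j‖ ^ 2 ≤ 2 * ‖Y i‖ ^ 2 + 2 * ‖Y j‖ ^ 2 := by
        have := norm_sub_le (Y i) (Y j)
        nlinarith [sq_nonneg (‖Y i‖ - ‖Y j‖), norm_nonneg (Y i - Y j), norm_nonneg (Y i), norm_nonneg (Y j)]
      calc ⟪Y i - Y j, f (Y i - Y j)⟫ ≤ max Lf 0 * ‖Y i - Y j‖ ^ 2 := h2
        _ ≤ max Lf 0 * (2 * ‖Y i‖ ^ 2 + 2 * ‖Y j‖ ^ 2) :=
          mul_le_mul_of_nonneg_left h3 (le_max_right _ _)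
    have hsum2 : ∑ i, ∑ j, ⟪Y i - Y j, f (Y i - Y j)⟫
        ≤ 4 * N * max Lf 0 * S := by
      calc ∑ i, ∑ j, ⟪Y i - Y j, f (Y i - Y j)⟫
          ≤ ∑ i, ∑ j, max Lf 0 * (2 * ‖Y i‖ ^ 2 + 2 * ‖Y j‖ ^ 2) :=
            Finset.sum_le_sum fun i _ => Finset.sum_le_sum fun j _ => hterm i j
        _ = 4 * N * max Lf 0 * S := by
            have e1 : ∀ i : Fin N, ∑ j, (2 * ‖Y i‖ ^ 2 + 2 * ‖Y j‖ ^ 2)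
                = 2 * N * ‖Y i‖ ^ 2 + 2 * S := by
              intro i
              rw [Finset.sum_add_distrib, Finset.sum_const, Finset.card_univ,
                Fintype.card_fin, nsmul_eq_mul, ← Finset.mul_sum, ← hS]
              ring
            have e2 : ∑ i, ∑ j, (2 * ‖Y i‖ ^ 2 + 2 * ‖Y j‖ ^ 2) = 4 * N * S := by
              simp only [e1]
              rw [Finset.sum_add_distrib, Finset.sum_const, Finset.card_univ,
                Fintype.card_fin, nsmul_eq_mul, ← Finset.mul_sum, ← hS]
              ring
            calc ∑ i, ∑ j, max Lf 0 * (2 * ‖Y i‖ ^ 2 + 2 * ‖Y j‖ ^ 2)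
                = max Lf 0 * ∑ i, ∑ j, (2 * ‖Y i‖ ^ 2 + 2 * ‖Y j‖ ^ 2) := by
                  simp only [Finset.mul_sum]
              _ = 4 * N * max Lf 0 * S := by rw [e2]; ring
    linarith [hsum2, hdouble]
  -- bound on ∑ ⟪Y i, v⟫
  have hv : ∑ i, ⟪Y i, vEmp f u (Y i) Y⟫
      ≤ N * Cu + (Lu + 1/2 + Lut + 2 * max Lf 0) * S := by
    have hvsplit : ∀ i, ⟪Y i, vEmp f u (Y i) Y⟫
        = ⟪Y i, u (Y i) (empMeas Y)⟫ + (N:ℝ)⁻¹ * ∑ j, ⟪Y i, f (Y i - Y j)⟫ := by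
      intro i
      rw [vEmp, inner_add_right, real_inner_smul_right, inner_sum]
    calc ∑ i, ⟪Y i, vEmp f u (Y i) Y⟫
        = (∑ i, ⟪Y i, u (Y i) (empMeas Y)⟫)
          + (N:ℝ)⁻¹ * ∑ i, ∑ j, ⟪Y i, f (Y i - Y j)⟫ := by
          simp only [hvsplit, Finset.sum_add_distrib, Finset.mul_sum]
      _ ≤ (∑ i, (Cu + (Lu + 1/2) * ‖Y i‖ ^ 2 + Lut / N * S))
          + (N:ℝ)⁻¹ * (2 * N * max Lf 0 * S) := by
          refine add_le_add (Finset.sum_le_sum fun i _ => hucoer (Y i) Y) ?_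
          exact mul_le_mul_of_nonneg_left hfbd (by positivity)
      _ = N * Cu + (Lu + 1/2 + Lut + 2 * max Lf 0) * S := by
          rw [Finset.sum_add_distrib, Finset.sum_add_distrib, Finset.sum_const,
            Finset.card_univ, Fintype.card_fin, nsmul_eq_mul, ← Finset.mul_sum,
            Finset.sum_const, Finset.card_univ, Fintype.card_fin, nsmul_eq_mul]
          rw [← hS]
          field_simp
          ring
  -- combine
  have hmain : S - T ≤ 2 * N * Cu * h + Λ * h * S := by
    have hsum := Finset.sum_le_sum (fun i (_ : i ∈ Finset.univ) => key i)
    rw [Finset.sum_sub_distrib, ← Finset.mul_sum] at hsum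
    calc S - T ≤ 2 * h * ∑ i, ⟪Y i, vEmp f u (Y i) Y⟫ := hsum
      _ ≤ 2 * h * (N * Cu + (Lu + 1/2 + Lut + 2 * max Lf 0) * S) :=
          mul_le_mul_of_nonneg_left hv (by positivity)
      _ = 2 * N * Cu * h + Λ * h * S := by rw [hΛ]; ring
  rw [le_div_iff₀ hden]
  nlinarith [hmain]
end

section
/- Let f : ℝ^d → ℝ^d be odd with f(0) = 0 and one-sided Lipschitz with constant L_f ∈ ℝ; let u be such that x ↦ u(x, μ) is one-sided Lipschitz with constant L_u ∈ ℝ for every probability measure μ and satisfies the coercivity bound ⟨y, u(y, μ^a)⟩ ≤ C_u + (L_u + 1/2)|y|² + (L_ũ/N) ∑_{j=1}^N |a_j|² for all y ∈ ℝ^d and all N-tuples a ∈ (ℝ^d)^N, with C_u ≥ 0 and L_ũ ≥ 0. Set ζ := max{2(L_f + L_u), 4 L_f⁺ + 2 L_u + 2 L_ũ + 1, 0} with L_f⁺ := max{L_f, 0}, and fix ξ ∈ (0, 1) and an integer p ≥ 1. Then there exists a constant C ≥ 0, depending only on L_f, L_u, L_ũ, C_u, p and ξ (in particular not on N or h), such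 that for every N ≥ 1, every h ∈ (0, 1] with ζh ≤ ξ, every implicit Euler step pair (X, Y) in (ℝ^d)^N and every i ∈ {1, …, N}: 4^p (1/N) ∑_{j=1}^N |Y_i − Y_j|^{2p} + 4^p ( (1/N) ∑_{j=1}^N (1 + |Y_j|²) )^p + 1 ≤ (1 + C h) [ 4^p (1/N) ∑_{j=1}^N |X_i − X_j|^{2p} + 4^p ( (1/N) ∑_{j=1}^N (1 + |X_j|²) )^p + 1 ]. -/
/-!
Writing `Xⱼ = Yⱼ - h v(Yⱼ, μ^Y)` and expanding `‖Xⱼ - Xₖ‖²` and `‖Xⱼ‖²` (dropping the `h²`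
terms) shows that the implicit step shrinks, by at most the factor `1 - ζh`, both the pairwise
distances (one-sided Lipschitz bound for `v`) and the empirical second moment (coercivity of `u`,
the interaction term being symmetrised by the oddness of `f`). Since `1 - ζh ≥ 1 - ξ`, each
ingredient of the Lyapunov functional therefore grows by at most `(1 + Dh)ᵖ` with
`D = (ζ + 2 Cu) / (1 - ξ)`, and convexity of `t ↦ tᵖ` gives `(1 + Dh)ᵖ ≤ 1 + ((1 + D)ᵖ - 1) h`
for `h ∈ [0, 1]`.
-/

open RealInnerProductSpace MeasureTheory

noncomputable def lyapunov {E : Type*} [NormedAddCommGroup E] {N : ℕ} (p : ℕ) (X : Fin N → E)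
    (i : Fin N) : ℝ :=
  (4 : ℝ) ^ p * ((N : ℝ)⁻¹ * ∑ j, ‖X i - X j‖ ^ (2 * p))
    + (4 : ℝ) ^ p * ((N : ℝ)⁻¹ * ∑ j, (1 + ‖X j‖ ^ 2)) ^ p + 1

theorem lyapunov_nonneg {E : Type*} [NormedAddCommGroup E] {N : ℕ} (p : ℕ) (X : Fin N → E)
    (i : Fin N) : 0 ≤ lyapunov p X i := by
  unfold lyapunov
  positivity

theorem lyapunov_le_pow_mul {E : Type*} [NormedAddCommGroup E] {N : ℕ} (p : ℕ) {q : ℝ}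
    (hq : 1 ≤ q) {X Y : Fin N → E} (i : Fin N)
    (hdist : ∀ j, ‖Y i - Y j‖ ^ 2 ≤ q * ‖X i - X j‖ ^ 2)
    (hmom : (N : ℝ)⁻¹ * ∑ j, (1 + ‖Y j‖ ^ 2) ≤ q * ((N : ℝ)⁻¹ * ∑ j, (1 + ‖X j‖ ^ 2))) :
    lyapunov p Y i ≤ q ^ p * lyapunov p X i := by
  have hdist_pow : (N : ℝ)⁻¹ * ∑ j, ‖Y i - Y j‖ ^ (2 * p)
      ≤ q ^ p * ((N : ℝ)⁻¹ * ∑ j, ‖X i - X j‖ ^ (2 * p)) := by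
    rw [mul_left_comm]
    gcongr
    rw [Finset.mul_sum]
    gcongr with j
    rw [pow_mul, pow_mul, ← mul_pow]
    gcongr
    exact hdist j
  have hmom_pow : ((N : ℝ)⁻¹ * ∑ j, (1 + ‖Y j‖ ^ 2)) ^ p
      ≤ q ^ p * ((N : ℝ)⁻¹ * ∑ j, (1 + ‖X j‖ ^ 2)) ^ p := by
    rw [← mul_pow]
    exact pow_le_pow_left₀ (by positivity) hmom p
  have h4 : (0 : ℝ) ≤ 4 ^ p := by positivity
  unfold lyapunov
  linear_combination mul_le_mul_of_nonneg_left hdist_pow h4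
    + mul_le_mul_of_nonneg_left hmom_pow h4 + one_le_pow₀ (n := p) hq

theorem one_add_mul_pow_le {D h : ℝ} (hD : 0 ≤ D) (h0 : 0 ≤ h) (h1 : h ≤ 1) (p : ℕ) :
    (1 + D * h) ^ p ≤ 1 + ((1 + D) ^ p - 1) * h := by
  have hconv := (convexOn_pow p).2 (Set.mem_Ici.2 zero_le_one)
    (Set.mem_Ici.2 (by linarith : (0 : ℝ) ≤ 1 + D)) (sub_nonneg.2 h1) h0 (by ring)
  simp only [smul_eq_mul, one_pow, mul_one] at hconv
  calc (1 + D * h) ^ p = (1 - h + h * (1 + D)) ^ p := by ring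
    _ ≤ 1 - h + h * (1 + D) ^ p := hconv
    _ = 1 + ((1 + D) ^ p - 1) * h := by ring

theorem le_mul_of_mul_le_mul {κ β q x y : ℝ} (hκ : 0 < κ) (hx : 0 ≤ x) (hβ : β ≤ q * κ)
    (h : κ * y ≤ β * x) : y ≤ q * x := by
  refine le_of_mul_le_mul_left (h.trans ?_) hκ
  calc β * x ≤ q * κ * x := mul_le_mul_of_nonneg_right hβ hx
    _ = κ * (q * x) := by ring

section InnerProductSpace

variable {E : Type*} [NormedAddCommGroup E] [InnerProductSpace ℝ E]

theorem norm_sq_sub_two_mul_inner_le (y w : E) (h : ℝ) :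
    ‖y‖ ^ 2 - 2 * h * ⟪y, w⟫ ≤ ‖y - h • w‖ ^ 2 := by
  rw [norm_sub_sq_real, real_inner_smul_right]
  nlinarith [sq_nonneg ‖h • w‖]

theorem two_mul_sum_sum_inner_apply_sub {ι : Type*} [Fintype ι] (f : E → E)
    (hodd : ∀ z, f (-z) = -f z) (Y : ι → E) :
    2 * ∑ j, ∑ k, ⟪Y j, f (Y j - Y k)⟫ = ∑ j, ∑ k, ⟪Y j - Y k, f (Y j - Y k)⟫ := by
  have hswap : ∑ j, ∑ k, ⟪Y k, f (Y j - Y k)⟫ = -∑ j, ∑ k, ⟪Y j, f (Y j - Y k)⟫ := by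
    rw [Finset.sum_comm, ← Finset.sum_neg_distrib]
    refine Finset.sum_congr rfl fun j _ => ?_
    rw [← Finset.sum_neg_distrib]
    refine Finset.sum_congr rfl fun k _ => ?_
    rw [← neg_sub, hodd, inner_neg_right]
  simp only [inner_sub_left, Finset.sum_sub_distrib, hswap]
  ring

theorem sum_sum_inner_apply_sub_le {ι : Type*} [Fintype ι] (f : E → E) (L : ℝ)
    (hf : ∀ z, ⟪z, f z⟫ ≤ L * ‖z‖ ^ 2) (Y : ι → E) :
    ∑ j, ∑ k, ⟪Y j - Y k, f (Y j - Y k)⟫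
      ≤ 4 * max L 0 * (Fintype.card ι * ∑ j, ‖Y j‖ ^ 2) := by
  calc ∑ j, ∑ k, ⟪Y j - Y k, f (Y j - Y k)⟫
      ≤ ∑ j, ∑ k, max L 0 * (2 * ‖Y j‖ ^ 2 + 2 * ‖Y k‖ ^ 2) := by
        gcongr with j _ k _
        calc ⟪Y j - Y k, f (Y j - Y k)⟫ ≤ L * ‖Y j - Y k‖ ^ 2 := hf _
          _ ≤ max L 0 * (‖Y j‖ + ‖Y k‖) ^ 2 :=
            mul_le_mul (le_max_left _ _) (pow_le_pow_left₀ (norm_nonneg _) (norm_sub_le _ _) 2)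
              (by positivity) (le_max_right _ _)
          _ ≤ max L 0 * (2 * ‖Y j‖ ^ 2 + 2 * ‖Y k‖ ^ 2) :=
            mul_le_mul_of_nonneg_left (by linarith [add_sq_le (a := ‖Y j‖) (b := ‖Y k‖)])
              (le_max_right _ _)
    _ = 4 * max L 0 * (Fintype.card ι * ∑ j, ‖Y j‖ ^ 2) := by
        simp only [← Finset.mul_sum, Finset.sum_add_distrib, Finset.sum_const,
          Finset.card_univ, nsmul_eq_mul]
        ring

end InnerProductSpace

section Drift

variable {d N : ℕ} {f : EuclideanSpace ℝ (Fin d) → EuclideanSpace ℝ (Fin d)}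
  {u : EuclideanSpace ℝ (Fin d) → Measure (EuclideanSpace ℝ (Fin d)) → EuclideanSpace ℝ (Fin d)}

theorem empMeas_isProbabilityMeasure (hN : N ≠ 0) (a : Fin N → EuclideanSpace ℝ (Fin d)) :
    IsProbabilityMeasure (empMeas a) := by
  constructor
  simp only [empMeas, Measure.smul_apply, Measure.finsetSum_apply, measure_univ, Finset.sum_const,
    Finset.card_univ, Fintype.card_fin, nsmul_eq_mul, mul_one, smul_eq_mul]
  exact ENNReal.inv_mul_cancel (by simp [hN]) (by simp)

theorem inner_sub_vEmp_sub_vEmp_le (hN : N ≠ 0) {Lf Lu : ℝ}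
    (hf : ∀ z z' : EuclideanSpace ℝ (Fin d), ⟪z - z', f z - f z'⟫ ≤ Lf * ‖z - z'‖ ^ 2)
    (hu : ∀ μ : Measure (EuclideanSpace ℝ (Fin d)), IsProbabilityMeasure μ →
      ∀ x x' : EuclideanSpace ℝ (Fin d), ⟪x - x', u x μ - u x' μ⟫ ≤ Lu * ‖x - x'‖ ^ 2)
    (x x' : EuclideanSpace ℝ (Fin d)) (a : Fin N → EuclideanSpace ℝ (Fin d)) :
    ⟪x - x', vEmp f u x a - vEmp f u x' a⟫ ≤ (Lf + Lu) * ‖x - x'‖ ^ 2 := by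
  have hinteraction : ∑ l, ⟪x - x', f (x - a l) - f (x' - a l)⟫ ≤ N * (Lf * ‖x - x'‖ ^ 2) := by
    calc ∑ l, ⟪x - x', f (x - a l) - f (x' - a l)⟫ ≤ ∑ _l : Fin N, Lf * ‖x - x'‖ ^ 2 :=
          Finset.sum_le_sum fun l _ => by
            simpa only [sub_sub_sub_cancel_right] using hf (x - a l) (x' - a l)
      _ = N * (Lf * ‖x - x'‖ ^ 2) := by simp
  have hsplit : vEmp f u x a - vEmp f u x' a = (u x (empMeas a) - u x' (empMeas a))
      + (N : ℝ)⁻¹ • ∑ l, (f (x - a l) - f (x' - a l)) := by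
    simp only [vEmp, Finset.sum_sub_distrib, smul_sub]
    abel
  rw [hsplit, inner_add_right, real_inner_smul_right, inner_sum]
  have hmean := (inv_mul_le_iff₀ (by positivity : (0 : ℝ) < N)).2 hinteraction
  linarith [hu _ (empMeas_isProbabilityMeasure hN a) x x']

theorem sum_inner_vEmp_le (hN : N ≠ 0) {Lf Lu Lut Cu : ℝ}
    (hodd : ∀ z : EuclideanSpace ℝ (Fin d), f (-z) = -f z) (hf0 : f 0 = 0)
    (hf : ∀ z z' : EuclideanSpace ℝ (Fin d), ⟪z - z', f z - f z'⟫ ≤ Lf * ‖z - z'‖ ^ 2)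
    (Y : Fin N → EuclideanSpace ℝ (Fin d))
    (hucoer : ∀ y : EuclideanSpace ℝ (Fin d),
      ⟪y, u y (empMeas Y)⟫ ≤ Cu + (Lu + 1 / 2) * ‖y‖ ^ 2 + Lut / N * ∑ j, ‖Y j‖ ^ 2) :
    ∑ j, ⟪Y j, vEmp f u (Y j) Y⟫
      ≤ N * Cu + (2 * max Lf 0 + Lu + Lut + 1 / 2) * ∑ j, ‖Y j‖ ^ 2 := by
  have hN' : (0 : ℝ) < N := by positivity
  have hsplit : ∑ j, ⟪Y j, vEmp f u (Y j) Y⟫ = ∑ j, ⟪Y j, u (Y j) (empMeas Y)⟫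
      + (N : ℝ)⁻¹ * ∑ j, ∑ k, ⟪Y j, f (Y j - Y k)⟫ := by
    simp only [vEmp, inner_add_right, real_inner_smul_right, inner_sum, Finset.sum_add_distrib,
      Finset.mul_sum]
  have hconf : ∑ j, ⟪Y j, u (Y j) (empMeas Y)⟫
      ≤ N * Cu + (Lu + 1 / 2 + Lut) * ∑ j, ‖Y j‖ ^ 2 := by
    calc ∑ j, ⟪Y j, u (Y j) (empMeas Y)⟫
        ≤ ∑ j, (Cu + (Lu + 1 / 2) * ‖Y j‖ ^ 2 + Lut / N * ∑ k, ‖Y k‖ ^ 2) :=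
          Finset.sum_le_sum fun j _ => hucoer (Y j)
      _ = N * Cu + (Lu + 1 / 2 + Lut) * ∑ j, ‖Y j‖ ^ 2 := by
          simp only [Finset.sum_add_distrib, Finset.sum_const, Finset.card_univ,
            Fintype.card_fin, nsmul_eq_mul, ← Finset.mul_sum]
          field_simp
          ring
  have hinteraction := sum_sum_inner_apply_sub_le f Lf (fun z => by simpa [hf0] using hf z 0) Y
  rw [← two_mul_sum_sum_inner_apply_sub f hodd, Fintype.card_fin] at hinteraction
  have hmean : (N : ℝ)⁻¹ * ∑ j, ∑ k, ⟪Y j, f (Y j - Y k)⟫ ≤ 2 * max Lf 0 * ∑ j, ‖Y j‖ ^ 2 :=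
    (inv_mul_le_iff₀ hN').2 (by linarith)
  linarith

variable {Lf Lu Lut Cu h ζ : ℝ} {X Y : Fin N → EuclideanSpace ℝ (Fin d)}

theorem IsImplicitPair.eq_sub (hpair : IsImplicitPair f u h X Y) (j : Fin N) :
    X j = Y j - h • vEmp f u (Y j) Y :=
  eq_sub_of_add_eq (hpair j).symm

theorem IsImplicitPair.mul_norm_sub_sq_le (hpair : IsImplicitPair f u h X Y) (hN : N ≠ 0)
    (hf : ∀ z z' : EuclideanSpace ℝ (Fin d), ⟪z - z', f z - f z'⟫ ≤ Lf * ‖z - z'‖ ^ 2)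
    (hu : ∀ μ : Measure (EuclideanSpace ℝ (Fin d)), IsProbabilityMeasure μ →
      ∀ x x' : EuclideanSpace ℝ (Fin d), ⟪x - x', u x μ - u x' μ⟫ ≤ Lu * ‖x - x'‖ ^ 2)
    (h0 : 0 ≤ h) (hζ : 2 * (Lf + Lu) ≤ ζ) (j k : Fin N) :
    (1 - ζ * h) * ‖Y j - Y k‖ ^ 2 ≤ ‖X j - X k‖ ^ 2 := by
  have hX : X j - X k = (Y j - Y k) - h • (vEmp f u (Y j) Y - vEmp f u (Y k) Y) := by
    rw [hpair.eq_sub j, hpair.eq_sub k, smul_sub]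
    abel
  have hexp := norm_sq_sub_two_mul_inner_le (Y j - Y k) (vEmp f u (Y j) Y - vEmp f u (Y k) Y) h
  rw [← hX] at hexp
  nlinarith [mul_le_mul_of_nonneg_left (inner_sub_vEmp_sub_vEmp_le hN hf hu (Y j) (Y k) Y) h0,
    mul_le_mul_of_nonneg_right hζ (mul_nonneg h0 (sq_nonneg ‖Y j - Y k‖))]

theorem IsImplicitPair.mul_moment_le (hpair : IsImplicitPair f u h X Y) (hN : N ≠ 0)
    (hodd : ∀ z : EuclideanSpace ℝ (Fin d), f (-z) = -f z) (hf0 : f 0 = 0)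
    (hf : ∀ z z' : EuclideanSpace ℝ (Fin d), ⟪z - z', f z - f z'⟫ ≤ Lf * ‖z - z'‖ ^ 2)
    (hucoer : ∀ y : EuclideanSpace ℝ (Fin d),
      ⟪y, u y (empMeas Y)⟫ ≤ Cu + (Lu + 1 / 2) * ‖y‖ ^ 2 + Lut / N * ∑ j, ‖Y j‖ ^ 2)
    (hCu : 0 ≤ Cu) (h0 : 0 ≤ h) (hζ0 : 0 ≤ ζ) (hζ : 4 * max Lf 0 + 2 * Lu + 2 * Lut + 1 ≤ ζ) :
    (1 - ζ * h) * ((N : ℝ)⁻¹ * ∑ j, (1 + ‖Y j‖ ^ 2))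
      ≤ (1 + 2 * Cu * h) * ((N : ℝ)⁻¹ * ∑ j, (1 + ‖X j‖ ^ 2)) := by
  have hstep : ∑ j, ‖Y j‖ ^ 2 - 2 * h * ∑ j, ⟪Y j, vEmp f u (Y j) Y⟫ ≤ ∑ j, ‖X j‖ ^ 2 := by
    rw [Finset.mul_sum, ← Finset.sum_sub_distrib]
    gcongr with j
    rw [hpair.eq_sub j]
    exact norm_sq_sub_two_mul_inner_le _ _ _
  have hcoer := sum_inner_vEmp_le hN hodd hf0 hf Y hucoer
  have hmoment : ∀ Z : Fin N → EuclideanSpace ℝ (Fin d),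
      (N : ℝ)⁻¹ * ∑ j, (1 + ‖Z j‖ ^ 2) = 1 + (N : ℝ)⁻¹ * ∑ j, ‖Z j‖ ^ 2 := by
    intro Z
    rw [Finset.sum_add_distrib, mul_add]
    simp [hN]
  rw [hmoment, hmoment]
  set A := ∑ j, ‖Y j‖ ^ 2
  set B := ∑ j, ‖X j‖ ^ 2
  have hA : 0 ≤ A := by positivity
  have hAB : (1 - ζ * h) * A - 2 * Cu * h * N ≤ B := by
    nlinarith [mul_le_mul_of_nonneg_right hζ (mul_nonneg h0 hA)]
  have hab : (1 - ζ * h) * ((N : ℝ)⁻¹ * A) - 2 * Cu * h ≤ (N : ℝ)⁻¹ * B := by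
    calc (1 - ζ * h) * ((N : ℝ)⁻¹ * A) - 2 * Cu * h
        = (N : ℝ)⁻¹ * ((1 - ζ * h) * A - 2 * Cu * h * N) := by field_simp
      _ ≤ (N : ℝ)⁻¹ * B := by gcongr
  have hb : 0 ≤ (N : ℝ)⁻¹ * B := by positivity
  nlinarith [mul_nonneg (mul_nonneg hCu h0) hb, mul_nonneg hζ0 h0]

end Drift

theorem lyapunov_one_step_bound_general (d : ℕ)
    (f : EuclideanSpace ℝ (Fin d) → EuclideanSpace ℝ (Fin d))
    (u : EuclideanSpace ℝ (Fin d) → Measure (EuclideanSpace ℝ (Fin d)) →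
      EuclideanSpace ℝ (Fin d))
    (Lf Lu Lut Cu : ℝ) (hCu : 0 ≤ Cu)
    (hodd : ∀ z : EuclideanSpace ℝ (Fin d), f (-z) = -f z)
    (hf0 : f 0 = 0)
    (hf : ∀ z z' : EuclideanSpace ℝ (Fin d), ⟪z - z', f z - f z'⟫ ≤ Lf * ‖z - z'‖ ^ 2)
    (hu : ∀ μ : Measure (EuclideanSpace ℝ (Fin d)), IsProbabilityMeasure μ →
      ∀ x x' : EuclideanSpace ℝ (Fin d), ⟪x - x', u x μ - u x' μ⟫ ≤ Lu * ‖x - x'‖ ^ 2)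
    (hucoer : ∀ (N : ℕ) (y : EuclideanSpace ℝ (Fin d))
        (a : Fin N → EuclideanSpace ℝ (Fin d)),
      ⟪y, u y (empMeas a)⟫ ≤ Cu + (Lu + 1 / 2) * ‖y‖ ^ 2 + Lut / N * ∑ j, ‖a j‖ ^ 2)
    (ξ : ℝ) (hξ1 : ξ < 1) (p : ℕ) :
    ∃ C : ℝ, 0 ≤ C ∧
      ∀ (N : ℕ), 1 ≤ N → ∀ h : ℝ, 0 < h → h ≤ 1 →
        max (2 * (Lf + Lu)) (max (4 * max Lf 0 + 2 * Lu + 2 * Lut + 1) 0) * h ≤ ξ →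
        ∀ X Y : Fin N → EuclideanSpace ℝ (Fin d), IsImplicitPair f u h X Y →
        ∀ i : Fin N,
          (4 : ℝ) ^ p * ((N : ℝ)⁻¹ * ∑ j, ‖Y i - Y j‖ ^ (2 * p))
              + (4 : ℝ) ^ p * ((N : ℝ)⁻¹ * ∑ j, (1 + ‖Y j‖ ^ 2)) ^ p + 1 ≤
            (1 + C * h) *
              ((4 : ℝ) ^ p * ((N : ℝ)⁻¹ * ∑ j, ‖X i - X j‖ ^ (2 * p))
                + (4 : ℝ) ^ p * ((N : ℝ)⁻¹ * ∑ j, (1 + ‖X j‖ ^ 2)) ^ p + 1) := by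
  set ζ := max (2 * (Lf + Lu)) (max (4 * max Lf 0 + 2 * Lu + 2 * Lut + 1) 0)
  have hζ0 : 0 ≤ ζ := (le_max_right _ _).trans (le_max_right _ _)
  set D := (ζ + 2 * Cu) / (1 - ξ)
  have hD : 0 ≤ D := div_nonneg (by positivity) (by linarith)
  have hDξ : D * (1 - ξ) = ζ + 2 * Cu := div_mul_cancel₀ _ (by linarith)
  refine ⟨(1 + D) ^ p - 1, sub_nonneg.2 (one_le_pow₀ (by linarith)), ?_⟩
  intro N hN h h0 h1 hζh X Y hpair i
  have hN0 : N ≠ 0 := by omega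
  have hκ : 0 < 1 - ζ * h := by linarith
  have hq : 1 + 2 * Cu * h ≤ (1 + D * h) * (1 - ζ * h) := by
    nlinarith [mul_nonneg (mul_nonneg hD h0.le) (sub_nonneg.2 hζh)]
  have hdist : ∀ j, ‖Y i - Y j‖ ^ 2 ≤ (1 + D * h) * ‖X i - X j‖ ^ 2 := fun j =>
    le_mul_of_mul_le_mul (β := 1) hκ (sq_nonneg _) (by linarith [mul_nonneg hCu h0.le])
      (by rw [one_mul]; exact hpair.mul_norm_sub_sq_le hN0 hf hu h0.le (le_max_left _ _) i j)
  have hmom := le_mul_of_mul_le_mul hκ (by positivity) hq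
    (hpair.mul_moment_le hN0 hodd hf0 hf (fun y => hucoer N y Y) hCu h0.le hζ0
      ((le_max_left _ _).trans (le_max_right _ _)))
  calc lyapunov p Y i ≤ (1 + D * h) ^ p * lyapunov p X i :=
        lyapunov_le_pow_mul p (le_add_of_nonneg_right (by positivity)) i hdist hmom
    _ ≤ (1 + ((1 + D) ^ p - 1) * h) * lyapunov p X i := by
        gcongr
        · exact lyapunov_nonneg p X i
        · exact one_add_mul_pow_le hD h0.le h1 p

/-- One-step contraction of the Lyapunov functional of the split-step
method: there is `C ≥ 0` (depending only on the constants and `ξ`, not on `N` or `h`) such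
that for every `N ≥ 1`, every `h ∈ (0,1]` with `ζh ≤ ξ`, every implicit Euler step pair
`(X, Y)` and every `i`, `H^{Y,p}_i ≤ (1 + Ch) H^{X,p}_i`. -/
theorem lyapunov_one_step_bound (d : ℕ) (hd : 1 ≤ d)
    (f : EuclideanSpace ℝ (Fin d) → EuclideanSpace ℝ (Fin d))
    (u : EuclideanSpace ℝ (Fin d) → Measure (EuclideanSpace ℝ (Fin d)) →
      EuclideanSpace ℝ (Fin d))
    (Lf Lu Lut Cu : ℝ) (hLut : 0 ≤ Lut) (hCu : 0 ≤ Cu)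
    (hodd : ∀ z : EuclideanSpace ℝ (Fin d), f (-z) = -f z)
    (hf0 : f 0 = 0)
    (hf : ∀ z z' : EuclideanSpace ℝ (Fin d), ⟪z - z', f z - f z'⟫ ≤ Lf * ‖z - z'‖ ^ 2)
    (hu : ∀ μ : Measure (EuclideanSpace ℝ (Fin d)), IsProbabilityMeasure μ →
      ∀ x x' : EuclideanSpace ℝ (Fin d), ⟪x - x', u x μ - u x' μ⟫ ≤ Lu * ‖x - x'‖ ^ 2)
    (hucoer : ∀ (N : ℕ) (y : EuclideanSpace ℝ (Fin d))
        (a : Fin N → EuclideanSpace ℝ (Fin d)),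
      ⟪y, u y (empMeas a)⟫ ≤ Cu + (Lu + 1 / 2) * ‖y‖ ^ 2 + Lut / N * ∑ j, ‖a j‖ ^ 2)
    (ξ : ℝ) (hξ0 : 0 < ξ) (hξ1 : ξ < 1) (p : ℕ) (hp : 1 ≤ p) :
    ∃ C : ℝ, 0 ≤ C ∧
      ∀ (N : ℕ), 1 ≤ N → ∀ h : ℝ, 0 < h → h ≤ 1 →
        max (2 * (Lf + Lu)) (max (4 * max Lf 0 + 2 * Lu + 2 * Lut + 1) 0) * h ≤ ξ →
        ∀ X Y : Fin N → EuclideanSpace ℝ (Fin d), IsImplicitPair f u h X Y →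
        ∀ i : Fin N,
          (4 : ℝ) ^ p * ((N : ℝ)⁻¹ * ∑ j, ‖Y i - Y j‖ ^ (2 * p))
              + (4 : ℝ) ^ p * ((N : ℝ)⁻¹ * ∑ j, (1 + ‖Y j‖ ^ 2)) ^ p + 1 ≤
            (1 + C * h) *
              ((4 : ℝ) ^ p * ((N : ℝ)⁻¹ * ∑ j, ‖X i - X j‖ ^ (2 * p))
                + (4 : ℝ) ^ p * ((N : ℝ)⁻¹ * ∑ j, (1 + ‖X j‖ ^ 2)) ^ p + 1) :=
  lyapunov_one_step_bound_general d f u Lf Lu Lut Cu hCu hodd hf0 hf hu hucoer ξ hξ1 p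
end

section
/- Let f : ℝ^d → ℝ^d satisfy f(0) = 0 and |f(z) − f(z')| ≤ L̂_f (1 + |z|^q + |z'|^q)|z − z'| for some L̂_f, q > 0; let u satisfy |u(x, μ) − u(x', μ)| ≤ L̂_u (1 + |x|^q + |x'|^q)|x − x'| for every probability measure μ, be Lipschitz along empirical measures with constant L_ũ ≥ 0, and set C_u := |u(0, δ_0)|². Then there exists C ≥ 0, depending only on L̂_f, L̂_u, q, L_ũ and C_u (in particular not on N or h), such that for every N ≥ 1, every h > 0, every implicit Euler step pair (X, Y) in (ℝ^d)^N and every i ∈ {1, …, N}: |X_i − Y_i|⁴ ≤ C h⁴ ( 1 + |Y_i|^{4q+4} + (1/N) ∑_{j=1}^N |Y_j|^{4q+4} ). -/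
open RealInnerProductSpace MeasureTheory

lemma sum4_sq (a b c d : ℝ) : (a+b+c+d)^2 ≤ 4*(a^2+b^2+c^2+d^2) := by
  nlinarith [sq_nonneg (a-b), sq_nonneg (a-c), sq_nonneg (a-d), sq_nonneg (b-c),
    sq_nonneg (b-d), sq_nonneg (c-d)]

lemma sum4_pow4 (a b c d : ℝ) : (a+b+c+d)^4 ≤ 64*(a^4+b^4+c^4+d^4) := by
  have h1 := sum4_sq a b c d
  have h2 := sum4_sq (a^2) (b^2) (c^2) (d^2)
  have h3 : ((a+b+c+d)^2)^2 ≤ (4*(a^2+b^2+c^2+d^2))^2 :=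
    pow_le_pow_left₀ (sq_nonneg _) h1 2
  nlinarith [sq_nonneg (a^2+b^2+c^2+d^2)]

lemma pow4_le_one_add (q t : ℝ) (hq : 0 < q) (ht : 0 ≤ t) :
    t^4 ≤ 1 + t ^ (4*q+4) := by
  rcases le_or_gt t 1 with h | h
  · have : t^4 ≤ 1 := pow_le_one₀ ht h
    have := Real.rpow_nonneg ht (4*q+4)
    linarith
  · have h1 : (1:ℝ) ≤ t := h.le
    have h2 : t ^ (((4:ℕ)):ℝ) ≤ t ^ (4*q+4) :=
      Real.rpow_le_rpow_of_exponent_le h1 (by push_cast; nlinarith)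
    rw [Real.rpow_natCast] at h2
    linarith

lemma growth4 (q t : ℝ) (hq : 0 < q) (ht : 0 ≤ t) :
    ((1 + t ^ q) * t)^4 ≤ 24 * (1 + t ^ (4*q+4)) := by
  set b := t ^ q with hb
  have hb0 : 0 ≤ b := Real.rpow_nonneg ht q
  have h1 : (1 + b)^4 ≤ 8 * (1 + b^4) := by
    nlinarith [sq_nonneg (b-1), sq_nonneg (b+1), sq_nonneg b,
      mul_nonneg (mul_nonneg hb0 hb0) hb0]
  have h2 : b^4 = t ^ (4*q) := by
    rw [hb, ← Real.rpow_natCast (t^q) 4, ← Real.rpow_mul ht]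
    norm_num [mul_comm]
  have h3 : t ^ (4*q) * t^4 = t ^ (4*q+4) := by
    rw [← Real.rpow_natCast t 4, ← Real.rpow_add' ht (by positivity)]
    norm_num
  have ht4 : (0:ℝ) ≤ t^4 := by positivity
  have h4 := pow4_le_one_add q t hq ht
  calc ((1 + b) * t)^4 = (1+b)^4 * t^4 := by ring
    _ ≤ 8 * (1 + b^4) * t^4 := by apply mul_le_mul_of_nonneg_right h1 ht4
    _ = 8 * t^4 + 8 * (t ^ (4*q) * t^4) := by rw [← h2]; ring
    _ = 8 * t^4 + 8 * t ^ (4*q+4) := by rw [h3]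
    _ ≤ 8 * (1 + t ^ (4*q+4)) + 8 * t ^ (4*q+4) := by linarith
    _ ≤ 24 * (1 + t ^ (4*q+4)) := by
        have := Real.rpow_nonneg ht (4*q+4); linarith

lemma rpow_add_le' (a b r : ℝ) (ha : 0 ≤ a) (hb : 0 ≤ b) (hr : 0 ≤ r) :
    (a + b) ^ r ≤ 2 ^ r * (a ^ r + b ^ r) := by
  have h1 : a + b ≤ 2 * max a b := by
    rcases max_cases a b with ⟨h, h'⟩ | ⟨h, h'⟩ <;> simp [h] <;> linarith
  have hm : 0 ≤ max a b := le_max_of_le_left ha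
  calc (a+b)^r ≤ (2 * max a b)^r := Real.rpow_le_rpow (by linarith) h1 hr
    _ = 2^r * (max a b)^r := Real.mul_rpow (by norm_num) hm
    _ ≤ 2^r * (a^r + b^r) := by
        apply mul_le_mul_of_nonneg_left _ (Real.rpow_nonneg (by norm_num) r)
        rcases max_cases a b with ⟨h, _⟩ | ⟨h, _⟩ <;> rw [h]
        · nlinarith [Real.rpow_nonneg hb r]
        · nlinarith [Real.rpow_nonneg ha r]

lemma avg_sq_le {N : ℕ} (hN : 0 < N) (s : Fin N → ℝ) :
    ((N:ℝ)⁻¹ * ∑ j, s j)^2 ≤ (N:ℝ)⁻¹ * ∑ j, (s j)^2 := by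
  have hcard := sq_sum_le_card_mul_sum_sq (s := (Finset.univ : Finset (Fin N))) (f := s)
  simp only [Finset.card_univ, Fintype.card_fin] at hcard
  have hNpos : (0:ℝ) < N := by exact_mod_cast hN
  have h2 : (N:ℝ)⁻¹ * (∑ j, s j)^2 ≤ ∑ j, (s j)^2 := by
    rw [inv_mul_le_iff₀ hNpos]; exact hcard
  calc ((N:ℝ)⁻¹ * ∑ j, s j)^2 = (N:ℝ)⁻¹ * ((N:ℝ)⁻¹ * (∑ j, s j)^2) := by ring
    _ ≤ (N:ℝ)⁻¹ * ∑ j, (s j)^2 := mul_le_mul_of_nonneg_left h2 (by positivity)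

lemma empMeas_zero_eq {d N : ℕ} (hN : 0 < N) :
    empMeas (fun _ : Fin N => (0 : EuclideanSpace ℝ (Fin d))) = Measure.dirac 0 := by
  have hN' : (N : ENNReal) ≠ 0 := by exact_mod_cast Nat.pos_iff_ne_zero.mp hN
  rw [empMeas, Finset.sum_const, Finset.card_univ, Fintype.card_fin,
    ← Nat.cast_smul_eq_nsmul ENNReal, smul_smul,
    ENNReal.inv_mul_cancel hN' (by simp), one_smul]

lemma empMeas_prob {d N : ℕ} (hN : 0 < N) (a : Fin N → EuclideanSpace ℝ (Fin d)) :
    IsProbabilityMeasure (empMeas a) := by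
  constructor
  have hN' : (N : ENNReal) ≠ 0 := by exact_mod_cast Nat.pos_iff_ne_zero.mp hN
  simp [empMeas, Measure.smul_apply, Measure.finset_sum_apply, smul_eq_mul,
    ENNReal.inv_mul_cancel hN']

set_option maxHeartbeats 1000000 in
/-- Fourth-power displacement bound for the implicit Euler step:
there is `C ≥ 0` (depending only on the growth constants, not on `N` or `h`) such that for
every `N ≥ 1`, every `h > 0`, every implicit Euler step pair `(X, Y)` and every `i`,
`‖Xᵢ − Yᵢ‖⁴ ≤ Ch⁴(1 + ‖Yᵢ‖^{4q+4} + (1/N)∑ⱼ‖Yⱼ‖^{4q+4})`. -/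
theorem implicit_step_displacement_fourth (d : ℕ) (hd : 1 ≤ d)
    (f : EuclideanSpace ℝ (Fin d) → EuclideanSpace ℝ (Fin d))
    (u : EuclideanSpace ℝ (Fin d) → Measure (EuclideanSpace ℝ (Fin d)) →
      EuclideanSpace ℝ (Fin d))
    (Lfh Luh q : ℝ) (hLfh : 0 < Lfh) (hLuh : 0 < Luh) (hq : 0 < q)
    (Lut : ℝ) (hLut : 0 ≤ Lut)
    (hf0 : f 0 = 0)
    (hfloc : ∀ z z' : EuclideanSpace ℝ (Fin d),
      ‖f z - f z'‖ ≤ Lfh * (1 + ‖z‖ ^ q + ‖z'‖ ^ q) * ‖z - z'‖)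
    (huloc : ∀ μ : Measure (EuclideanSpace ℝ (Fin d)), IsProbabilityMeasure μ →
      ∀ x x' : EuclideanSpace ℝ (Fin d),
        ‖u x μ - u x' μ‖ ≤ Luh * (1 + ‖x‖ ^ q + ‖x'‖ ^ q) * ‖x - x'‖)
    (huemp : ∀ (N : ℕ) (x : EuclideanSpace ℝ (Fin d))
        (a b : Fin N → EuclideanSpace ℝ (Fin d)),
      ‖u x (empMeas a) - u x (empMeas b)‖ ^ 2 ≤ Lut / N * ∑ j, ‖a j - b j‖ ^ 2) :
    ∃ C : ℝ, 0 ≤ C ∧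
      ∀ (N : ℕ), 1 ≤ N → ∀ h : ℝ, 0 < h →
        ∀ X Y : Fin N → EuclideanSpace ℝ (Fin d), IsImplicitPair f u h X Y →
        ∀ i : Fin N,
          ‖X i - Y i‖ ^ 4 ≤
            C * h ^ 4 *
              (1 + ‖Y i‖ ^ (4 * q + 4) + (N : ℝ)⁻¹ * ∑ j, ‖Y j‖ ^ (4 * q + 4)) := by
  classical
  set Cu : ℝ := ‖u 0 (Measure.dirac (0 : EuclideanSpace ℝ (Fin d)))‖ with hCudef
  have hCu0 : 0 ≤ Cu := norm_nonneg _
  set K : ℝ := (2:ℝ) ^ (4*q+4) with hKdef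
  have hK0 : (0:ℝ) ≤ K := Real.rpow_nonneg (by norm_num) _
  refine ⟨64 * (24 * Luh^4 + Lut^2 + Cu^4 + 24 * Lfh^4 * (1 + K)), by positivity, ?_⟩
  intro N hN h hh X Y hpair i
  have hNpos : 0 < N := hN
  have hNR : (0:ℝ) < N := by exact_mod_cast hN
  haveI hμprob : IsProbabilityMeasure (empMeas Y) := empMeas_prob hNpos Y
  set x : EuclideanSpace ℝ (Fin d) := Y i with hxdef
  set μ : Measure (EuclideanSpace ℝ (Fin d)) := empMeas Y with hμdef
  set Pi : ℝ := ‖x‖ ^ (4*q+4) with hPidef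
  set S : ℝ := (N:ℝ)⁻¹ * ∑ j, ‖Y j‖ ^ (4*q+4) with hSdef
  have hPi0 : 0 ≤ Pi := Real.rpow_nonneg (norm_nonneg _) _
  have hsum0 : 0 ≤ ∑ j, ‖Y j‖ ^ (4*q+4) :=
    Finset.sum_nonneg fun j _ => Real.rpow_nonneg (norm_nonneg _) _
  have hS0 : 0 ≤ S := mul_nonneg (by positivity) hsum0
  set A : ℝ := 1 + Pi + S with hAdef
  have hA1 : (1:ℝ) ≤ A := by simp only [hAdef]; linarith
  -- displacement identity
  have hp := hpair i
  set w : EuclideanSpace ℝ (Fin d) := h • vEmp f u x Y with hwdef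
  have hdisp : ‖X i - x‖ = h * ‖vEmp f u x Y‖ := by
    have hx2 : X i - x = -w := by rw [hxdef, hp]; abel
    rw [hx2, norm_neg, hwdef, norm_smul, Real.norm_eq_abs, abs_of_pos hh]
  -- term definitions
  set T1 : ℝ := ‖u x μ - u 0 μ‖ with hT1def
  set T2 : ℝ := ‖u 0 μ - u 0 (Measure.dirac (0 : EuclideanSpace ℝ (Fin d)))‖ with hT2def
  set T4 : ℝ := (N:ℝ)⁻¹ * ∑ j, ‖f (x - Y j)‖ with hT4def
  have hT10 : 0 ≤ T1 := norm_nonneg _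
  have hT20 : 0 ≤ T2 := norm_nonneg _
  have hT40 : 0 ≤ T4 := mul_nonneg (by positivity)
    (Finset.sum_nonneg fun j _ => norm_nonneg _)
  -- triangle inequality
  have hv : ‖vEmp f u x Y‖ ≤ T1 + T2 + Cu + T4 := by
    have e1 : ‖u x μ‖ ≤ T1 + T2 + Cu := by
      have : u x μ = (u x μ - u 0 μ) + ((u 0 μ - u 0 (Measure.dirac 0)) +
          u 0 (Measure.dirac 0)) := by abel
      rw [this]
      refine le_trans (norm_add_le _ _) ?_
      have := norm_add_le (u 0 μ - u 0 (Measure.dirac (0:EuclideanSpace ℝ (Fin d))))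
        (u 0 (Measure.dirac 0))
      rw [hT1def, hT2def, hCudef]; linarith
    have e2 : ‖(N : ℝ)⁻¹ • ∑ j, f (x - Y j)‖ ≤ T4 := by
      rw [norm_smul, Real.norm_eq_abs, abs_of_pos (by positivity)]
      exact mul_le_mul_of_nonneg_left (norm_sum_le _ _) (by positivity)
    calc ‖vEmp f u x Y‖ = ‖u x μ + (N : ℝ)⁻¹ • ∑ j, f (x - Y j)‖ := by
          rw [vEmp, hμdef]
      _ ≤ ‖u x μ‖ + ‖(N : ℝ)⁻¹ • ∑ j, f (x - Y j)‖ := norm_add_le _ _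
      _ ≤ T1 + T2 + Cu + T4 := by linarith
  -- T1 bound
  have hT1 : T1^4 ≤ 24 * Luh^4 * (1 + Pi) := by
    have e1 := huloc μ hμprob x 0
    simp only [norm_zero, Real.zero_rpow hq.ne', sub_zero, add_zero] at e1
    have e2 : T1 ≤ Luh * ((1 + ‖x‖^q) * ‖x‖) := by rw [hT1def]; linarith [e1]
    have e3 : T1^4 ≤ (Luh * ((1 + ‖x‖^q) * ‖x‖))^4 := pow_le_pow_left₀ hT10 e2 4
    have e4 : ((1 + ‖x‖^q) * ‖x‖)^4 ≤ 24 * (1 + Pi) := growth4 q ‖x‖ hq (norm_nonneg _)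
    calc T1^4 ≤ Luh^4 * ((1 + ‖x‖^q) * ‖x‖)^4 := by rw [mul_pow] at e3; exact e3
      _ ≤ Luh^4 * (24 * (1 + Pi)) := mul_le_mul_of_nonneg_left e4 (by positivity)
      _ = 24 * Luh^4 * (1 + Pi) := by ring
  -- T2 bound
  have hT2 : T2^4 ≤ Lut^2 * (1 + S) := by
    have e1 := huemp N 0 Y (fun _ => 0)
    rw [empMeas_zero_eq hNpos] at e1
    simp only [sub_zero] at e1
    have e2 : T2^2 ≤ Lut * ((N:ℝ)⁻¹ * ∑ j, ‖Y j‖^2) := by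
      rw [hT2def, hμdef]
      calc ‖u 0 (empMeas Y) - u 0 (Measure.dirac 0)‖^2
          ≤ Lut / N * ∑ j, ‖Y j‖^2 := e1
        _ = Lut * ((N:ℝ)⁻¹ * ∑ j, ‖Y j‖^2) := by ring
    have e3 : (T2^2)^2 ≤ (Lut * ((N:ℝ)⁻¹ * ∑ j, ‖Y j‖^2))^2 :=
      pow_le_pow_left₀ (sq_nonneg _) e2 2
    have e4 : ((N:ℝ)⁻¹ * ∑ j, ‖Y j‖^2)^2 ≤ (N:ℝ)⁻¹ * ∑ j, (‖Y j‖^2)^2 :=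
      avg_sq_le hNpos _
    have e5 : ∑ j, (‖Y j‖^2)^2 ≤ ∑ j, (1 + ‖Y j‖ ^ (4*q+4)) := by
      apply Finset.sum_le_sum
      intro j _
      have := pow4_le_one_add q ‖Y j‖ hq (norm_nonneg _)
      calc (‖Y j‖^2)^2 = ‖Y j‖^4 := by ring
        _ ≤ 1 + ‖Y j‖ ^ (4*q+4) := this
    have e6 : (N:ℝ)⁻¹ * ∑ j, (1 + ‖Y j‖ ^ (4*q+4)) = 1 + S := by
      rw [Finset.sum_add_distrib, Finset.sum_const, Finset.card_univ, Fintype.card_fin,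
        nsmul_eq_mul, mul_one, mul_add, inv_mul_cancel₀ hNR.ne', hSdef]
    have e7 : (N:ℝ)⁻¹ * ∑ j, (‖Y j‖^2)^2 ≤ 1 + S := by
      rw [← e6]
      exact mul_le_mul_of_nonneg_left e5 (by positivity)
    calc T2^4 = (T2^2)^2 := by ring
      _ ≤ (Lut * ((N:ℝ)⁻¹ * ∑ j, ‖Y j‖^2))^2 := e3
      _ = Lut^2 * ((N:ℝ)⁻¹ * ∑ j, ‖Y j‖^2)^2 := by ring
      _ ≤ Lut^2 * ((N:ℝ)⁻¹ * ∑ j, (‖Y j‖^2)^2) := mul_le_mul_of_nonneg_left e4 (by positivity)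
      _ ≤ Lut^2 * (1 + S) := mul_le_mul_of_nonneg_left e7 (by positivity)
  -- T4 bound
  have hT4 : T4^4 ≤ 24 * Lfh^4 * (1 + K * Pi + K * S) := by
    set s : Fin N → ℝ := fun j => ‖f (x - Y j)‖ with hsdef
    have hs0 : ∀ j, 0 ≤ s j := fun j => norm_nonneg _
    have j1 : T4^2 ≤ (N:ℝ)⁻¹ * ∑ j, (s j)^2 := avg_sq_le hNpos s
    have j2 : (T4^2)^2 ≤ ((N:ℝ)⁻¹ * ∑ j, (s j)^2)^2 :=
      pow_le_pow_left₀ (sq_nonneg _) j1 2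
    have j3 : ((N:ℝ)⁻¹ * ∑ j, (s j)^2)^2 ≤ (N:ℝ)⁻¹ * ∑ j, ((s j)^2)^2 :=
      avg_sq_le hNpos _
    have j4 : ∀ j, ((s j)^2)^2 ≤ 24 * Lfh^4 * (1 + K * Pi + K * ‖Y j‖ ^ (4*q+4)) := by
      intro j
      have f1 : s j ≤ Lfh * ((1 + ‖x - Y j‖^q) * ‖x - Y j‖) := by
        have := hfloc (x - Y j) 0
        simp only [hf0, norm_zero, Real.zero_rpow hq.ne', sub_zero, add_zero] at this
        rw [hsdef]; dsimp only; linarith [this]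
      have f2 : (s j)^4 ≤ (Lfh * ((1 + ‖x - Y j‖^q) * ‖x - Y j‖))^4 :=
        pow_le_pow_left₀ (hs0 j) f1 4
      have f3 : ((1 + ‖x - Y j‖^q) * ‖x - Y j‖)^4 ≤ 24 * (1 + ‖x - Y j‖ ^ (4*q+4)) :=
        growth4 q _ hq (norm_nonneg _)
      have f4 : ‖x - Y j‖ ^ (4*q+4) ≤ K * (Pi + ‖Y j‖ ^ (4*q+4)) := by
        have g1 : ‖x - Y j‖ ^ (4*q+4) ≤ (‖x‖ + ‖Y j‖) ^ (4*q+4) :=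
          Real.rpow_le_rpow (norm_nonneg _) (norm_sub_le _ _) (by nlinarith)
        have g2 := rpow_add_le' ‖x‖ ‖Y j‖ (4*q+4) (norm_nonneg _) (norm_nonneg _)
          (by nlinarith)
        rw [hKdef, hPidef]; linarith
      have hr0 : 0 ≤ ‖x - Y j‖ ^ (4*q+4) := Real.rpow_nonneg (norm_nonneg _) _
      calc ((s j)^2)^2 = (s j)^4 := by ring
        _ ≤ (Lfh * ((1 + ‖x - Y j‖^q) * ‖x - Y j‖))^4 := f2
        _ = Lfh^4 * ((1 + ‖x - Y j‖^q) * ‖x - Y j‖)^4 := by ring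
        _ ≤ Lfh^4 * (24 * (1 + ‖x - Y j‖ ^ (4*q+4))) :=
            mul_le_mul_of_nonneg_left f3 (by positivity)
        _ ≤ Lfh^4 * (24 * (1 + K * (Pi + ‖Y j‖ ^ (4*q+4)))) := by
            apply mul_le_mul_of_nonneg_left _ (by positivity)
            linarith
        _ = 24 * Lfh^4 * (1 + K * Pi + K * ‖Y j‖ ^ (4*q+4)) := by ring
    have j5 : ∑ j, ((s j)^2)^2 ≤ ∑ j, 24 * Lfh^4 * (1 + K * Pi + K * ‖Y j‖ ^ (4*q+4)) :=
      Finset.sum_le_sum fun j _ => j4 j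
    have j6 : (N:ℝ)⁻¹ * ∑ j, 24 * Lfh^4 * (1 + K * Pi + K * ‖Y j‖ ^ (4*q+4)) =
        24 * Lfh^4 * (1 + K * Pi + K * S) := by
      rw [hSdef]
      rw [show (∑ j, 24 * Lfh^4 * (1 + K * Pi + K * ‖Y j‖ ^ (4*q+4))) =
        (∑ j : Fin N, 24 * Lfh^4 * (1 + K * Pi)) +
          24 * Lfh^4 * K * ∑ j, ‖Y j‖ ^ (4*q+4) by
          rw [Finset.mul_sum, ← Finset.sum_add_distrib]; apply Finset.sum_congr rfl
          intro j _; ring]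
      rw [Finset.sum_const, Finset.card_univ, Fintype.card_fin, nsmul_eq_mul,
        mul_add, ← mul_assoc, inv_mul_cancel₀ hNR.ne', one_mul]
      ring
    calc T4^4 = (T4^2)^2 := by ring
      _ ≤ ((N:ℝ)⁻¹ * ∑ j, (s j)^2)^2 := j2
      _ ≤ (N:ℝ)⁻¹ * ∑ j, ((s j)^2)^2 := j3
      _ ≤ (N:ℝ)⁻¹ * ∑ j, 24 * Lfh^4 * (1 + K * Pi + K * ‖Y j‖ ^ (4*q+4)) :=
          mul_le_mul_of_nonneg_left j5 (by positivity)
      _ = 24 * Lfh^4 * (1 + K * Pi + K * S) := j6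
  -- combine
  have hv4 : ‖vEmp f u x Y‖^4 ≤
      64 * (24 * Luh^4 + Lut^2 + Cu^4 + 24 * Lfh^4 * (1 + K)) * A := by
    have c1 : ‖vEmp f u x Y‖^4 ≤ (T1 + T2 + Cu + T4)^4 :=
      pow_le_pow_left₀ (norm_nonneg _) hv 4
    have c2 := sum4_pow4 T1 T2 Cu T4
    have c3 : Cu^4 ≤ Cu^4 * A := le_mul_of_one_le_right (by positivity) hA1
    have c4 : 24 * Luh^4 * (1 + Pi) ≤ 24 * Luh^4 * A := by
      apply mul_le_mul_of_nonneg_left _ (by positivity)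
      rw [hAdef]; linarith
    have c5 : Lut^2 * (1 + S) ≤ Lut^2 * A := by
      apply mul_le_mul_of_nonneg_left _ (by positivity)
      rw [hAdef]; linarith
    have c6 : 24 * Lfh^4 * (1 + K * Pi + K * S) ≤ 24 * Lfh^4 * ((1 + K) * A) := by
      apply mul_le_mul_of_nonneg_left _ (by positivity)
      rw [hAdef]
      nlinarith [mul_nonneg hK0 hPi0, mul_nonneg hK0 hS0]
    calc ‖vEmp f u x Y‖^4 ≤ (T1 + T2 + Cu + T4)^4 := c1
      _ ≤ 64 * (T1^4 + T2^4 + Cu^4 + T4^4) := c2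
      _ ≤ 64 * (24 * Luh^4 * A + Lut^2 * A + Cu^4 * A + 24 * Lfh^4 * ((1+K) * A)) := by
          have := hT1.trans c4
          have := hT2.trans c5
          have := hT4.trans c6
          linarith
      _ = 64 * (24 * Luh^4 + Lut^2 + Cu^4 + 24 * Lfh^4 * (1 + K)) * A := by ring
  -- finish
  have hfin : ‖X i - Y i‖^4 = h^4 * ‖vEmp f u x Y‖^4 := by
    rw [hdisp]; ring
  rw [hfin]
  calc h^4 * ‖vEmp f u x Y‖^4
      ≤ h^4 * (64 * (24 * Luh^4 + Lut^2 + Cu^4 + 24 * Lfh^4 * (1 + K)) * A) :=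
        mul_le_mul_of_nonneg_left hv4 (by positivity)
    _ = 64 * (24 * Luh^4 + Lut^2 + Cu^4 + 24 * Lfh^4 * (1 + K)) * h^4 * A := by ring
end
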